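/- Let σ = ReLU, d ∈ ℕ, and h ∈ ℕ with h ≥ 3, and set m = (1,1,1,h−3). Every function in the class tilde-G_{d,σ,h}(ℝ^d,ℝ), i.e. every function of the form vᵀ ∘ Φ_L ∘ A_{L−1} ∘ ⋯ ∘ Φ₂ ∘ A₁ ∘ Φ₁ ∘ Q with Q ∈ R_{d,m}, A₁,…,A_{L−1} ∈ L_m, Φ₁,…,Φ_L ∈ Ẽ_{h−3,σ}, v ∈ ℝ^h with ‖v‖₁ ≤ 1, and L ∈ ℕ, is 1-Lipschitz from (ℝ^d, ‖·‖₂) to ℝ. -/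

import Mathlib

open scoped BigOperators

noncomputable section

def relu (t : ℝ) : ℝ := max t 0

def entrywise {n : ℕ} (σ : ℝ → ℝ) (x : EuclideanSpace ℝ (Fin n)) : EuclideanSpace ℝ (Fin n) :=
  WithLp.toLp 2 (fun i => σ (x i))

def matVec {k h : ℕ} (W : Matrix (Fin k) (Fin h) ℝ) (x : EuclideanSpace ℝ (Fin h)) :
    EuclideanSpace ℝ (Fin k) :=
  Matrix.toEuclideanLin W x

/-- Spectral norm of a real matrix, as the operator norm between Euclidean spaces. -/
def specNorm {k h : ℕ} (W : Matrix (Fin k) (Fin h) ℝ) : ℝ :=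
  ‖LinearMap.toContinuousLinearMap (Matrix.toEuclideanLin W)‖

/-- Membership in `E_{h,σ}` with `σ = ReLU`. -/
def IsEulerStep {h : ℕ} (Φ : EuclideanSpace ℝ (Fin h) → EuclideanSpace ℝ (Fin h)) : Prop :=
  ∃ (k : ℕ) (W : Matrix (Fin k) (Fin h) ℝ) (b : EuclideanSpace ℝ (Fin k)) (τ : ℝ),
    0 ≤ τ ∧ τ ≤ 2 ∧ specNorm W ≤ 1 ∧
    ∀ x, Φ x = x - τ • matVec W.transpose (entrywise relu (matVec W x + b))

def compChain {α : Type*} : (L : ℕ) → (Fin L → α → α) → α → α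
  | 0, _, x => x
  | L + 1, Φ, x => Φ (Fin.last L) (compChain L (fun i => Φ i.castSucc) x)

/-- Membership in `G_{d,σ}(X,ℝ)` with `σ = ReLU`. -/
def InG {d : ℕ} (X : Set (EuclideanSpace ℝ (Fin d))) (g : EuclideanSpace ℝ (Fin d) → ℝ) : Prop :=
  LipschitzOnWith 1 g X ∧
  ∃ (h L : ℕ) (Qhat : Matrix (Fin h) (Fin d) ℝ) (qhat : EuclideanSpace ℝ (Fin h))
    (Φ : Fin L → (EuclideanSpace ℝ (Fin h) → EuclideanSpace ℝ (Fin h)))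
    (v : EuclideanSpace ℝ (Fin h)),
    (∀ ℓ, IsEulerStep (Φ ℓ)) ∧ ‖v‖ = 1 ∧
    ∀ x ∈ X, g x = ∑ i, v i * compChain L Φ (matVec Qhat x + qhat) i

def concatE {h₁ h₂ : ℕ} (u : EuclideanSpace ℝ (Fin h₁)) (v : EuclideanSpace ℝ (Fin h₂)) :
    EuclideanSpace ℝ (Fin (h₁ + h₂)) :=
  WithLp.toLp 2 (Fin.append (fun i => u i) (fun i => v i))

/-- The residual blocks in `Ẽ_{h,σ}`: `(max{x₁,x₂}, min{x₁,x₂}, x₃, Φ'(x₄,…,x_{h+3}))`. -/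
def tildeLayer {h : ℕ} (Φ' : EuclideanSpace ℝ (Fin h) → EuclideanSpace ℝ (Fin h))
    (x : EuclideanSpace ℝ (Fin (h + 3))) : EuclideanSpace ℝ (Fin (h + 3)) :=
  WithLp.toLp 2 fun (j : Fin (h + 3)) =>
    if _h0 : (j : ℕ) = 0 then max (x ⟨0, by omega⟩) (x ⟨1, by omega⟩)
    else if _h1 : (j : ℕ) = 1 then min (x ⟨0, by omega⟩) (x ⟨1, by omega⟩)
    else if _h2 : (j : ℕ) = 2 then x ⟨2, by omega⟩
    else Φ' (WithLp.toLp 2 fun (i : Fin h) => x ⟨(i : ℕ) + 3, by have := i.isLt; omega⟩)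
      ⟨(j : ℕ) - 3, by have := j.isLt; omega⟩

/-- Membership in `Ẽ_{h,σ}` with `σ = ReLU`. -/
def IsTildeLayer {h : ℕ} (Φ : EuclideanSpace ℝ (Fin (h + 3)) → EuclideanSpace ℝ (Fin (h + 3))) :
    Prop :=
  ∃ Φ', IsEulerStep Φ' ∧ ∀ x, Φ x = tildeLayer Φ' x

def emb0 {n : ℕ} : Fin 1 → Fin (n + 3) := fun _ => ⟨0, by omega⟩
def emb1 {n : ℕ} : Fin 1 → Fin (n + 3) := fun _ => ⟨1, by omega⟩
def emb2 {n : ℕ} : Fin 1 → Fin (n + 3) := fun _ => ⟨2, by omega⟩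
def embT {n : ℕ} : Fin n → Fin (n + 3) := fun i => ⟨(i : ℕ) + 3, by have := i.isLt; omega⟩

/-- Membership in `R_{d,m}` for `m = (1,1,1,n)`: each block row of the matrix has spectral
norm at most `1`. -/
def memRm {d n : ℕ} (Q : Matrix (Fin (n + 3)) (Fin d) ℝ) : Prop :=
  specNorm (Q.submatrix emb0 id) ≤ 1 ∧ specNorm (Q.submatrix emb1 id) ≤ 1 ∧
    specNorm (Q.submatrix emb2 id) ≤ 1 ∧ specNorm (Q.submatrix embT id) ≤ 1

def rowBlockSum {n r : ℕ} (A : Matrix (Fin (n + 3)) (Fin (n + 3)) ℝ)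
    (e : Fin r → Fin (n + 3)) : ℝ :=
  specNorm (A.submatrix e emb0) + specNorm (A.submatrix e emb1) +
    specNorm (A.submatrix e emb2) + specNorm (A.submatrix e embT)

/-- Membership in `L_m` for `m = (1,1,1,n)`: for each block row, the sum of the spectral
norms of the blocks is at most `1`. -/
def memLm {n : ℕ} (A : Matrix (Fin (n + 3)) (Fin (n + 3)) ℝ) : Prop :=
  rowBlockSum A emb0 ≤ 1 ∧ rowBlockSum A emb1 ≤ 1 ∧
    rowBlockSum A emb2 ≤ 1 ∧ rowBlockSum A embT ≤ 1

/-- `Φ_{L+1} ∘ A_L ∘ ⋯ ∘ Φ₂ ∘ A₁ ∘ Φ₁`, the alternating composition. -/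
def altChain {α : Type*} : (L : ℕ) → (Fin (L + 1) → α → α) → (Fin L → α → α) → α → α
  | 0, Φ, _, x => Φ 0 x
  | L + 1, Φ, A, x =>
      Φ (Fin.last (L + 1)) (A (Fin.last L)
        (altChain L (fun i => Φ i.castSucc) (fun i => A i.castSucc) x))

/-- Membership in the fixed-width class `tilde-G_{d,σ,n+3}(X,ℝ)` with `σ = ReLU`. -/
def InTildeG {d n : ℕ} (X : Set (EuclideanSpace ℝ (Fin d)))
    (g : EuclideanSpace ℝ (Fin d) → ℝ) : Prop :=
  ∃ (L : ℕ) (Qhat : Matrix (Fin (n + 3)) (Fin d) ℝ) (qhat : EuclideanSpace ℝ (Fin (n + 3)))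
    (Φ : Fin (L + 1) → (EuclideanSpace ℝ (Fin (n + 3)) → EuclideanSpace ℝ (Fin (n + 3))))
    (Ahat : Fin L → Matrix (Fin (n + 3)) (Fin (n + 3)) ℝ)
    (ahat : Fin L → EuclideanSpace ℝ (Fin (n + 3)))
    (v : EuclideanSpace ℝ (Fin (n + 3))),
    memRm Qhat ∧ (∀ ℓ, IsTildeLayer (Φ ℓ)) ∧ (∀ ℓ, memLm (Ahat ℓ)) ∧ (∑ i, |v i|) ≤ 1 ∧
    ∀ x ∈ X,
      g x = ∑ i, v i *
        altChain L Φ (fun ℓ u => matVec (Ahat ℓ) u + ahat ℓ) (matVec Qhat x + qhat) i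

end

/-!
Measure vectors of `ℝ^(n+3)` by the block norm `N(u) = max(|u₁|, |u₂|, |u₃|, ‖(u₄,…,u_{n+3})‖₂)`
adapted to `m = (1,1,1,n)`. Each block row of `Q ∈ R_{d,m}` has spectral norm at most `1`, so
`N(Q̂x) ≤ ‖x‖₂`. The row condition defining `L_m` gives `N(Âu) ≤ N(u)`. A layer of
`Ẽ` is `N`-nonexpansive, because `(a, b) ↦ (max a b, min a b)` is `1`-Lipschitz for the sup norm
and an Euler step `y ↦ y - τ Wᵀ σ(Wy + b)` is `‖·‖₂`-nonexpansive for `τ ∈ [0, 2]`: ReLU is firmly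
nonexpansive, so with `s = σ(Wy+b) - σ(Wz+b)` one gets
`‖Φ y - Φ z‖² ≤ ‖y - z‖² - τ(2 - τ)‖s‖²`. Finally `|vᵀu| ≤ ‖v‖₁ N(u)`.
-/

open scoped RealInnerProductSpace Matrix.Norms.L2Operator

section Linear

variable {k m : ℕ}

lemma specNorm_eq_norm (W : Matrix (Fin k) (Fin m) ℝ) : specNorm W = ‖W‖ := rfl

lemma matVec_apply (W : Matrix (Fin k) (Fin m) ℝ) (x : EuclideanSpace ℝ (Fin m)) (j : Fin k) :
    matVec W x j = ∑ i, W j i * x i := rfl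

lemma matVec_sub (W : Matrix (Fin k) (Fin m) ℝ) (x y : EuclideanSpace ℝ (Fin m)) :
    matVec W (x - y) = matVec W x - matVec W y :=
  map_sub _ x y

lemma norm_matVec_le (W : Matrix (Fin k) (Fin m) ℝ) (x : EuclideanSpace ℝ (Fin m)) :
    ‖matVec W x‖ ≤ specNorm W * ‖x‖ :=
  (LinearMap.toContinuousLinearMap (Matrix.toEuclideanLin W)).le_opNorm x

lemma norm_matVec_le_of_specNorm_le_one {W : Matrix (Fin k) (Fin m) ℝ} (hW : specNorm W ≤ 1)
    (x : EuclideanSpace ℝ (Fin m)) : ‖matVec W x‖ ≤ ‖x‖ :=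
  (norm_matVec_le W x).trans (mul_le_of_le_one_left (norm_nonneg x) hW)

lemma specNorm_transpose (W : Matrix (Fin k) (Fin m) ℝ) : specNorm W.transpose = specNorm W := by
  rw [specNorm_eq_norm, specNorm_eq_norm, ← Matrix.conjTranspose_eq_transpose_of_trivial,
    Matrix.l2_opNorm_conjTranspose]

lemma inner_matVec_transpose (W : Matrix (Fin k) (Fin m) ℝ) (s : EuclideanSpace ℝ (Fin k))
    (x : EuclideanSpace ℝ (Fin m)) : ⟪matVec W.transpose s, x⟫ = ⟪s, matVec W x⟫ := by
  rw [matVec, ← Matrix.conjTranspose_eq_transpose_of_trivial,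
    Matrix.toEuclideanLin_conjTranspose_eq_adjoint, LinearMap.adjoint_inner_left]
  rfl

end Linear

lemma relu_sub_sq_le (a b : ℝ) : (relu a - relu b) ^ 2 ≤ (a - b) * (relu a - relu b) := by
  simp only [relu]
  rcases max_cases a 0 with ⟨ha, _⟩ | ⟨ha, _⟩ <;> rcases max_cases b 0 with ⟨hb, _⟩ | ⟨hb, _⟩ <;>
    rw [ha, hb] <;> nlinarith

lemma norm_entrywise_sub_sq_le_inner {k : ℕ} {σ : ℝ → ℝ}
    (hσ : ∀ a b, (σ a - σ b) ^ 2 ≤ (a - b) * (σ a - σ b)) (u w : EuclideanSpace ℝ (Fin k)) :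
    ‖entrywise σ u - entrywise σ w‖ ^ 2 ≤ ⟪u - w, entrywise σ u - entrywise σ w⟫ := by
  rw [← real_inner_self_eq_norm_sq]
  simp only [PiLp.inner_apply, RCLike.inner_apply, conj_trivial]
  refine Finset.sum_le_sum fun i _ => ?_
  simpa [entrywise, sq, mul_comm] using hσ (u i) (w i)

theorem IsEulerStep.norm_sub_le {k : ℕ} {Φ : EuclideanSpace ℝ (Fin k) → EuclideanSpace ℝ (Fin k)}
    (hΦ : IsEulerStep Φ) (y z : EuclideanSpace ℝ (Fin k)) : ‖Φ y - Φ z‖ ≤ ‖y - z‖ := by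
  obtain ⟨m, W, b, τ, hτ0, hτ2, hW, hΦ⟩ := hΦ
  set s := entrywise relu (matVec W y + b) - entrywise relu (matVec W z + b)
  set t := matVec W.transpose s
  have hdiff : Φ y - Φ z = (y - z) - τ • t := by
    rw [hΦ, hΦ, show t = _ from matVec_sub _ _ _]
    module
  have hst : ‖s‖ ^ 2 ≤ ⟪y - z, t⟫ := by
    rw [real_inner_comm, inner_matVec_transpose, real_inner_comm, matVec_sub,
      ← add_sub_add_right_eq_sub _ _ b]
    exact norm_entrywise_sub_sq_le_inner relu_sub_sq_le _ _
  have hts : ‖t‖ ≤ ‖s‖ :=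
    norm_matVec_le_of_specNorm_le_one ((specNorm_transpose W).trans_le hW) s
  have hsq : ‖Φ y - Φ z‖ ^ 2 ≤ ‖y - z‖ ^ 2 :=
    calc ‖Φ y - Φ z‖ ^ 2 = ‖y - z‖ ^ 2 - 2 * τ * ⟪y - z, t⟫ + τ ^ 2 * ‖t‖ ^ 2 := by
          rw [hdiff, norm_sub_sq_real, real_inner_smul_right, norm_smul, Real.norm_eq_abs,
            mul_pow, sq_abs]
          ring
      _ ≤ ‖y - z‖ ^ 2 - τ * (2 - τ) * ‖s‖ ^ 2 := by
          have := pow_le_pow_left₀ (norm_nonneg t) hts 2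
          nlinarith [mul_le_mul_of_nonneg_left hst hτ0,
            mul_le_mul_of_nonneg_left this (sq_nonneg τ)]
      _ ≤ ‖y - z‖ ^ 2 := by
          have : 0 ≤ τ * (2 - τ) * ‖s‖ ^ 2 := by
            have : 0 ≤ 2 - τ := by linarith
            positivity
          linarith
  exact (pow_le_pow_iff_left₀ (norm_nonneg _) (norm_nonneg _) two_ne_zero).1 hsq

def blockOf {m r : ℕ} (e : Fin r → Fin m) (u : EuclideanSpace ℝ (Fin m)) :
    EuclideanSpace ℝ (Fin r) :=
  WithLp.toLp 2 fun i => u (e i)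

section Blocks

variable {m r : ℕ}

lemma blockOf_sub (e : Fin r → Fin m) (u w : EuclideanSpace ℝ (Fin m)) :
    blockOf e (u - w) = blockOf e u - blockOf e w := rfl

lemma blockOf_matVec {d : ℕ} (Q : Matrix (Fin m) (Fin d) ℝ) (e : Fin r → Fin m)
    (x : EuclideanSpace ℝ (Fin d)) : blockOf e (matVec Q x) = matVec (Q.submatrix e id) x := rfl

lemma abs_apply_le_norm_blockOf (e : Fin r → Fin m) (u : EuclideanSpace ℝ (Fin m)) (i : Fin r) :
    |u (e i)| ≤ ‖blockOf e u‖ :=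
  PiLp.norm_apply_le (blockOf e u) i

lemma norm_blockOf_fin_one (e : Fin 1 → Fin m) (u : EuclideanSpace ℝ (Fin m)) :
    ‖blockOf e u‖ = |u (e 0)| := by
  simp [EuclideanSpace.norm_eq, blockOf, Real.sqrt_sq_eq_abs]

end Blocks

section BlockNorm

variable {n : ℕ}

lemma eq_emb_cases (i : Fin (n + 3)) :
    i = emb0 0 ∨ i = emb1 0 ∨ i = emb2 0 ∨ ∃ k, i = embT k := by
  rcases i with ⟨_ | _ | _ | k, hk⟩
  · exact Or.inl rfl
  · exact Or.inr (Or.inl rfl)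
  · exact Or.inr (Or.inr (Or.inl rfl))
  · exact Or.inr (Or.inr (Or.inr ⟨⟨k, by omega⟩, rfl⟩))

lemma sum_fin_add_three (f : Fin (n + 3) → ℝ) :
    ∑ i, f i = f (emb0 0) + f (emb1 0) + f (emb2 0) + ∑ k, f (embT k) := by
  simp only [Fin.sum_univ_succ, add_assoc]
  rfl

noncomputable def blockNorm (u : EuclideanSpace ℝ (Fin (n + 3))) : ℝ :=
  max (max ‖blockOf emb0 u‖ ‖blockOf emb1 u‖) (max ‖blockOf emb2 u‖ ‖blockOf embT u‖)

lemma blockNorm_le_iff {u : EuclideanSpace ℝ (Fin (n + 3))} {c : ℝ} :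
    blockNorm u ≤ c ↔ ‖blockOf emb0 u‖ ≤ c ∧ ‖blockOf emb1 u‖ ≤ c ∧ ‖blockOf emb2 u‖ ≤ c ∧
      ‖blockOf embT u‖ ≤ c := by
  simp only [blockNorm, max_le_iff, and_assoc]

lemma norm_blockOf_le_blockNorm (u : EuclideanSpace ℝ (Fin (n + 3))) :
    ‖blockOf emb0 u‖ ≤ blockNorm u ∧ ‖blockOf emb1 u‖ ≤ blockNorm u ∧
      ‖blockOf emb2 u‖ ≤ blockNorm u ∧ ‖blockOf embT u‖ ≤ blockNorm u :=
  blockNorm_le_iff.1 le_rfl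

lemma blockNorm_nonneg (u : EuclideanSpace ℝ (Fin (n + 3))) : 0 ≤ blockNorm u :=
  (norm_nonneg _).trans (norm_blockOf_le_blockNorm u).1

lemma abs_apply_le_blockNorm (u : EuclideanSpace ℝ (Fin (n + 3))) (i : Fin (n + 3)) :
    |u i| ≤ blockNorm u := by
  obtain ⟨h0, h1, h2, hT⟩ := norm_blockOf_le_blockNorm u
  rcases eq_emb_cases i with rfl | rfl | rfl | ⟨k, rfl⟩
  · exact (abs_apply_le_norm_blockOf _ u 0).trans h0
  · exact (abs_apply_le_norm_blockOf _ u 0).trans h1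
  · exact (abs_apply_le_norm_blockOf _ u 0).trans h2
  · exact (abs_apply_le_norm_blockOf _ u k).trans hT

lemma abs_sum_mul_le_blockNorm (v u : EuclideanSpace ℝ (Fin (n + 3))) :
    |∑ i, v i * u i| ≤ (∑ i, |v i|) * blockNorm u :=
  calc |∑ i, v i * u i| ≤ ∑ i, |v i| * |u i| := by
        simpa only [abs_mul] using Finset.abs_sum_le_sum_abs (fun i => v i * u i) Finset.univ
    _ ≤ ∑ i, |v i| * blockNorm u := by
        gcongr with i; exact abs_apply_le_blockNorm u i
    _ = (∑ i, |v i|) * blockNorm u := (Finset.sum_mul _ _ _).symm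

lemma blockNorm_matVec_le_of_memRm {d : ℕ} {Q : Matrix (Fin (n + 3)) (Fin d) ℝ} (hQ : memRm Q)
    (x : EuclideanSpace ℝ (Fin d)) : blockNorm (matVec Q x) ≤ ‖x‖ := by
  obtain ⟨h0, h1, h2, hT⟩ := hQ
  simp only [blockNorm_le_iff, blockOf_matVec]
  exact ⟨norm_matVec_le_of_specNorm_le_one h0 x, norm_matVec_le_of_specNorm_le_one h1 x,
    norm_matVec_le_of_specNorm_le_one h2 x, norm_matVec_le_of_specNorm_le_one hT x⟩

lemma blockOf_matVec_eq_sum (A : Matrix (Fin (n + 3)) (Fin (n + 3)) ℝ) {r : ℕ}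
    (e : Fin r → Fin (n + 3))
    (u : EuclideanSpace ℝ (Fin (n + 3))) :
    blockOf e (matVec A u) =
      matVec (A.submatrix e emb0) (blockOf emb0 u) + matVec (A.submatrix e emb1) (blockOf emb1 u)
        + matVec (A.submatrix e emb2) (blockOf emb2 u)
        + matVec (A.submatrix e embT) (blockOf embT u) := by
  ext i
  simp only [PiLp.add_apply, matVec_apply, Fin.sum_univ_one, Matrix.submatrix_apply]
  exact sum_fin_add_three fun j => A (e i) j * u j

end BlockNorm

section Layers

variable {n : ℕ}

lemma norm_blockOf_matVec_le (A : Matrix (Fin (n + 3)) (Fin (n + 3)) ℝ) {r : ℕ}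
    (e : Fin r → Fin (n + 3)) (u : EuclideanSpace ℝ (Fin (n + 3))) :
    ‖blockOf e (matVec A u)‖ ≤ rowBlockSum A e * blockNorm u := by
  obtain ⟨h0, h1, h2, hT⟩ := norm_blockOf_le_blockNorm u
  have hblock : ∀ {s : ℕ} (f : Fin s → Fin (n + 3)), ‖blockOf f u‖ ≤ blockNorm u →
      ‖matVec (A.submatrix e f) (blockOf f u)‖ ≤ specNorm (A.submatrix e f) * blockNorm u :=
    fun f hf => (norm_matVec_le _ _).trans (by gcongr; exact norm_nonneg _)
  rw [blockOf_matVec_eq_sum, rowBlockSum]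
  refine norm_add₄_le.trans ?_
  linarith [hblock _ h0, hblock _ h1, hblock _ h2, hblock _ hT]

lemma blockNorm_matVec_le_of_memLm {A : Matrix (Fin (n + 3)) (Fin (n + 3)) ℝ} (hA : memLm A)
    (u : EuclideanSpace ℝ (Fin (n + 3))) : blockNorm (matVec A u) ≤ blockNorm u := by
  have hu := blockNorm_nonneg u
  obtain ⟨h0, h1, h2, hT⟩ := hA
  refine blockNorm_le_iff.2 ⟨?_, ?_, ?_, ?_⟩ <;>
    refine (norm_blockOf_matVec_le A _ u).trans (mul_le_of_le_one_left hu ?_) <;> assumption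

end Layers

section Tilde

variable {n : ℕ} (Φ' : EuclideanSpace ℝ (Fin n) → EuclideanSpace ℝ (Fin n))
  (x : EuclideanSpace ℝ (Fin (n + 3)))

lemma tildeLayer_emb0 : tildeLayer Φ' x (emb0 0) = max (x (emb0 0)) (x (emb1 0)) := rfl

lemma tildeLayer_emb1 : tildeLayer Φ' x (emb1 0) = min (x (emb0 0)) (x (emb1 0)) := rfl

lemma tildeLayer_emb2 : tildeLayer Φ' x (emb2 0) = x (emb2 0) := rfl

lemma blockOf_embT_tildeLayer : blockOf embT (tildeLayer Φ' x) = Φ' (blockOf embT x) := by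
  ext i
  simp [tildeLayer, blockOf, embT]

end Tilde

lemma blockNorm_tildeLayer_sub_le {n : ℕ}
    {Φ' : EuclideanSpace ℝ (Fin n) → EuclideanSpace ℝ (Fin n)}
    (hΦ' : ∀ y z, ‖Φ' y - Φ' z‖ ≤ ‖y - z‖) (x y : EuclideanSpace ℝ (Fin (n + 3))) :
    blockNorm (tildeLayer Φ' x - tildeLayer Φ' y) ≤ blockNorm (x - y) := by
  obtain ⟨h0, h1, h2, hT⟩ := norm_blockOf_le_blockNorm (x - y)
  simp only [norm_blockOf_fin_one, PiLp.sub_apply] at h0 h1 h2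
  simp only [blockNorm_le_iff, norm_blockOf_fin_one]
  simp only [PiLp.sub_apply, blockOf_sub, tildeLayer_emb0, tildeLayer_emb1, tildeLayer_emb2,
    blockOf_embT_tildeLayer]
  exact ⟨(abs_max_sub_max_le_max _ _ _ _).trans (max_le h0 h1),
    (abs_min_sub_min_le_max _ _ _ _).trans (max_le h0 h1), h2, (hΦ' _ _).trans hT⟩

theorem IsTildeLayer.blockNorm_sub_le {n : ℕ}
    {Φ : EuclideanSpace ℝ (Fin (n + 3)) → EuclideanSpace ℝ (Fin (n + 3))} (hΦ : IsTildeLayer Φ)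
    (x y : EuclideanSpace ℝ (Fin (n + 3))) : blockNorm (Φ x - Φ y) ≤ blockNorm (x - y) := by
  obtain ⟨Φ', hΦ', hΦ⟩ := hΦ
  obtain rfl := funext hΦ
  exact blockNorm_tildeLayer_sub_le hΦ'.norm_sub_le x y

theorem altChain_nonexpansive {α : Type*} (ρ : α → α → ℝ) :
    ∀ (L : ℕ) (Φ : Fin (L + 1) → α → α) (A : Fin L → α → α),
      (∀ ℓ x y, ρ (Φ ℓ x) (Φ ℓ y) ≤ ρ x y) → (∀ ℓ x y, ρ (A ℓ x) (A ℓ y) ≤ ρ x y) →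
      ∀ x y, ρ (altChain L Φ A x) (altChain L Φ A y) ≤ ρ x y
  | 0, _, _, hΦ, _, x, y => hΦ 0 x y
  | L + 1, _, _, hΦ, hA, x, y =>
    (hΦ _ _ _).trans <| (hA _ _ _).trans <|
      altChain_nonexpansive ρ L _ _ (fun ℓ => hΦ ℓ.castSucc) (fun ℓ => hA ℓ.castSucc) x y

/-- Every function in the fixed-width class `tilde-G_{d,ReLU,h}(ℝ^d,ℝ)`
(with width `h = n + 3 ≥ 3` and `m = (1,1,1,n)`) is `1`-Lipschitz. -/
theorem stmt12 (d n L : ℕ)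
    (Qhat : Matrix (Fin (n + 3)) (Fin d) ℝ) (qhat : EuclideanSpace ℝ (Fin (n + 3)))
    (hQ : memRm Qhat)
    (Φ : Fin (L + 1) → (EuclideanSpace ℝ (Fin (n + 3)) → EuclideanSpace ℝ (Fin (n + 3))))
    (hΦ : ∀ ℓ, IsTildeLayer (Φ ℓ))
    (Ahat : Fin L → Matrix (Fin (n + 3)) (Fin (n + 3)) ℝ)
    (ahat : Fin L → EuclideanSpace ℝ (Fin (n + 3)))
    (hA : ∀ ℓ, memLm (Ahat ℓ))
    (v : EuclideanSpace ℝ (Fin (n + 3))) (hv : (∑ i, |v i|) ≤ 1) :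
    LipschitzWith 1 (fun x : EuclideanSpace ℝ (Fin d) =>
      ∑ i, v i *
        altChain L Φ (fun ℓ u => matVec (Ahat ℓ) u + ahat ℓ) (matVec Qhat x + qhat) i) := by
  set G := altChain L Φ (fun ℓ u => matVec (Ahat ℓ) u + ahat ℓ)
  have hG : ∀ u w, blockNorm (G u - G w) ≤ blockNorm (u - w) :=
    altChain_nonexpansive (fun u w => blockNorm (u - w)) L _ _ (fun ℓ => (hΦ ℓ).blockNorm_sub_le)
      fun ℓ u w => by
        simpa only [add_sub_add_right_eq_sub, matVec_sub] using
          blockNorm_matVec_le_of_memLm (hA ℓ) (u - w)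
  have hxy : ∀ x y, blockNorm (G (matVec Qhat x + qhat) - G (matVec Qhat y + qhat)) ≤ ‖x - y‖ :=
    fun x y => (hG _ _).trans <| by
      simpa only [add_sub_add_right_eq_sub, matVec_sub] using
        blockNorm_matVec_le_of_memRm hQ (x - y)
  refine LipschitzWith.of_dist_le_mul fun x y => ?_
  rw [Real.dist_eq, dist_eq_norm, NNReal.coe_one, one_mul, ← Finset.sum_sub_distrib]
  calc |∑ i, (v i * G (matVec Qhat x + qhat) i - v i * G (matVec Qhat y + qhat) i)|
      = |∑ i, v i * (G (matVec Qhat x + qhat) - G (matVec Qhat y + qhat)) i| := by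
        simp only [PiLp.sub_apply, mul_sub]
    _ ≤ (∑ i, |v i|) * blockNorm (G (matVec Qhat x + qhat) - G (matVec Qhat y + qhat)) :=
        abs_sum_mul_le_blockNorm v _
    _ ≤ ‖x - y‖ := (mul_le_of_le_one_left (blockNorm_nonneg _) hv).trans (hxy x y)
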